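/- Let K be a field, G a finite simple connected graph, and I_G = I_{G_1} + I_{G_2} a reduced splitting of the toric ideal I_G. Then there exist a set F ⊆ E(G) of edges and a minimal generating set of binomials S of I_G such that I_{G_1} = I_{G_S^F} and I_{G_2} = I_{G∖F}. -/

import Mathlib

open MvPolynomial

/-- The monomial `y_u * y_w` associated to the edge `e = {u, w}`. -/
noncomputable def edgeMon (K : Type) [Field K] {V : Type} (e : Sym2 V) :
    MvPolynomial V K :=
  Sym2.lift ⟨fun u w => X u * X w, fun u w => mul_comm _ _⟩ e

/-- The toric ideal `I_G` of a graph `G`, i.e. the kernel of the `K`-algebra map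
`K[x_e : e ∈ E(G)] → K[y_v : v ∈ V]`, sending `x_e ↦ y_u y_w` for `e = {u, w}`. -/
noncomputable def toricIdeal (K : Type) [Field K] {V : Type} (G : SimpleGraph V) :
    Ideal (MvPolynomial G.edgeSet K) :=
  RingHom.ker (MvPolynomial.aeval (fun e : G.edgeSet => edgeMon K (e : Sym2 V)) :
    MvPolynomial G.edgeSet K →ₐ[K] MvPolynomial V K)

/-- For a subgraph `H ≤ G`, the ideal of `K[x_e : e ∈ E(G)]` obtained by extending
the toric ideal `I_H` along the inclusion of variables `x_e` (`e ∈ E(H)`). -/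
noncomputable def extIdeal (K : Type) [Field K] {V : Type} (G H : SimpleGraph V)
    (h : H ≤ G) : Ideal (MvPolynomial G.edgeSet K) :=
  (toricIdeal K H).map
    (MvPolynomial.rename (Set.inclusion (SimpleGraph.edgeSet_mono h)) :
      MvPolynomial H.edgeSet K →ₐ[K] MvPolynomial G.edgeSet K)

/-- A subgraph splitting `I_G = I_{G₁} + I_{G₂}`, with `I_{G₁} ≠ I_G ≠ I_{G₂}`. -/
def IsSubgraphSplitting (K : Type) [Field K] {V : Type} (G G₁ G₂ : SimpleGraph V)
    (h₁ : G₁ ≤ G) (h₂ : G₂ ≤ G) : Prop :=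
  toricIdeal K G = extIdeal K G G₁ h₁ + extIdeal K G G₂ h₂ ∧
    extIdeal K G G₁ h₁ ≠ toricIdeal K G ∧ extIdeal K G G₂ h₂ ≠ toricIdeal K G

/-- `I_G` is subgraph splittable. -/
def SubgraphSplittable (K : Type) [Field K] {V : Type} (G : SimpleGraph V) : Prop :=
  ∃ (G₁ G₂ : SimpleGraph V) (h₁ : G₁ ≤ G) (h₂ : G₂ ≤ G),
    IsSubgraphSplitting K G G₁ G₂ h₁ h₂

/-- Alternating products: for a list `[e₁, …, e₂q]` the first component is
`x_{e₁} x_{e₃} ⋯` (odd positions) and the second is `x_{e₂} x_{e₄} ⋯` (even positions). -/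
noncomputable def altProd (K : Type) [Field K] {α : Type} :
    List α → MvPolynomial α K × MvPolynomial α K
  | [] => (1, 1)
  | a :: l => (X a * (altProd K l).2, (altProd K l).1)

/-- The edges of a walk in `G`, as a list of elements of `E(G)`. -/
def walkEdgeList {V : Type} {G : SimpleGraph V} {u v : V} (w : G.Walk u v) :
    List G.edgeSet :=
  w.edges.attachWith (· ∈ G.edgeSet) (fun _ he => w.edges_subset_edgeSet he)

/-- The binomial `B_w` of an even closed walk `w = (e_{i₁}, …, e_{i₂q})`:
`∏ x_{e_{i_{2k-1}}} - ∏ x_{e_{i_{2k}}}`. -/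
noncomputable def walkBinomial (K : Type) [Field K] {V : Type} {G : SimpleGraph V}
    {v : V} (w : G.Walk v v) : MvPolynomial G.edgeSet K :=
  (altProd K (walkEdgeList w)).1 - (altProd K (walkEdgeList w)).2

/-- `f` is a binomial of `I_G`, i.e. `f = B_w` for an even closed walk `w` of `G`. -/
def IsBinomial (K : Type) [Field K] {V : Type} (G : SimpleGraph V)
    (f : MvPolynomial G.edgeSet K) : Prop :=
  ∃ (v : V) (w : G.Walk v v), Even w.length ∧ f = walkBinomial K w

/-- `S` is a minimal generating set of binomials of the ideal `I`: all its members
are binomials `B_w`, it generates `I`, and no proper subset generates `I`. -/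
def IsMinBinomialGens (K : Type) [Field K] {V : Type} (G : SimpleGraph V)
    (S : Set (MvPolynomial G.edgeSet K)) (I : Ideal (MvPolynomial G.edgeSet K)) : Prop :=
  (∀ f ∈ S, IsBinomial K G f) ∧ Ideal.span S = I ∧
    ∀ T : Set (MvPolynomial G.edgeSet K), T ⊂ S → Ideal.span T ≠ I

/-- A family of even closed walks `w₁, …, w_r` of `G` (the data underlying a set of
binomials `S = {B_{w₁}, …, B_{w_r}}`). -/
structure BinomialWalkGens (K : Type) [Field K] {V : Type} (G : SimpleGraph V) where
  r : ℕ
  base : Fin r → V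
  walk : (i : Fin r) → G.Walk (base i) (base i)
  even : ∀ i, Even (walk i).length

namespace BinomialWalkGens

variable {K : Type} [Field K] {V : Type} {G : SimpleGraph V}

/-- The set of binomials `{B_{w₁}, …, B_{w_r}}`. -/
def binomials (S : BinomialWalkGens K G) : Set (MvPolynomial G.edgeSet K) :=
  Set.range fun i => walkBinomial K (S.walk i)

/-- `S = {B_{w₁}, …, B_{w_r}}` is a minimal generating set of binomials of `I`. -/
def IsMinGens (S : BinomialWalkGens K G) (I : Ideal (MvPolynomial G.edgeSet K)) : Prop :=
  IsMinBinomialGens K G S.binomials I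

/-- The subgraph `G_S^e` of `G`: the union of the walks `w_i` with `e ∈ E(w_i)`. -/
def GSe (S : BinomialWalkGens K G) (e : Sym2 V) : SimpleGraph V :=
  SimpleGraph.fromEdgeSet (⋃ i ∈ {i : Fin S.r | e ∈ (S.walk i).edges}, {f | f ∈ (S.walk i).edges})

lemma GSe_le (S : BinomialWalkGens K G) (e : Sym2 V) : S.GSe e ≤ G := by
  intro u w h
  rw [GSe, SimpleGraph.fromEdgeSet_adj] at h
  obtain ⟨hm, hne⟩ := h
  simp only [Set.mem_iUnion, Set.mem_setOf_eq] at hm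
  obtain ⟨i, -, hi⟩ := hm
  exact G.mem_edgeSet.mp ((S.walk i).edges_subset_edgeSet hi)

/-- The subgraph `G_S^F = ⋃_{e ∈ F} G_S^e` of `G`. -/
def GSF (S : BinomialWalkGens K G) (F : Set (Sym2 V)) : SimpleGraph V :=
  ⨆ e ∈ F, S.GSe e

lemma GSF_le (S : BinomialWalkGens K G) (F : Set (Sym2 V)) : S.GSF F ≤ G :=
  iSup₂_le fun e _ => S.GSe_le e

/-- The subgraph `G_S^v` of `G`: the union of the edge sets of the walks `w_i`
with `v ∈ V(w_i)`. -/
def GSv (S : BinomialWalkGens K G) (v : V) : SimpleGraph V :=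
  SimpleGraph.fromEdgeSet (⋃ i ∈ {i : Fin S.r | v ∈ (S.walk i).support}, {f | f ∈ (S.walk i).edges})

lemma GSv_le (S : BinomialWalkGens K G) (v : V) : S.GSv v ≤ G := by
  intro u w h
  rw [GSv, SimpleGraph.fromEdgeSet_adj] at h
  obtain ⟨hm, hne⟩ := h
  simp only [Set.mem_iUnion, Set.mem_setOf_eq] at hm
  obtain ⟨i, -, hi⟩ := hm
  exact G.mem_edgeSet.mp ((S.walk i).edges_subset_edgeSet hi)

end BinomialWalkGens

/-- `I_G` is edge splittable: there are an edge `e` of `G` and a minimal generating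
set of binomials `S` of `I_G` such that `I_G = I_{G_S^e} + I_{G∖e}` is a subgraph
splitting of `I_G`. -/
def EdgeSplittable (K : Type) [Field K] {V : Type} (G : SimpleGraph V) : Prop :=
  ∃ (e : Sym2 V) (_ : e ∈ G.edgeSet) (S : BinomialWalkGens K G),
    S.IsMinGens (toricIdeal K G) ∧
    IsSubgraphSplitting K G (S.GSe e) (G.deleteEdges {e}) (S.GSe_le e)
      (SimpleGraph.deleteEdges_le _)

/-- A minimal splitting: a subgraph splitting `I_G = I_{G₁} + I_{G₂}` admitting
minimal generating sets of binomials `S` of `I_{G₁}` and `T` of `I_{G₂}` such that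
`S ∪ T` is a minimal generating set of `I_G`. -/
def IsMinimalSplitting (K : Type) [Field K] {V : Type} (G G₁ G₂ : SimpleGraph V)
    (h₁ : G₁ ≤ G) (h₂ : G₂ ≤ G) : Prop :=
  IsSubgraphSplitting K G G₁ G₂ h₁ h₂ ∧
    ∃ S T : Set (MvPolynomial G.edgeSet K),
      IsMinBinomialGens K G S (extIdeal K G G₁ h₁) ∧
      IsMinBinomialGens K G T (extIdeal K G G₂ h₂) ∧
      IsMinBinomialGens K G (S ∪ T) (toricIdeal K G)

/-- A reduced splitting: a subgraph splitting `I_G = I_{G₁} + I_{G₂}` such that for all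
subgraphs `H₁ ⊆ G₁`, `H₂ ⊆ G₂` with `I_G = I_{H₁} + I_{H₂}` one has `I_{H₁} = I_{G₁}`
and `I_{H₂} = I_{G₂}`. -/
def IsReducedSplitting (K : Type) [Field K] {V : Type} (G G₁ G₂ : SimpleGraph V)
    (h₁ : G₁ ≤ G) (h₂ : G₂ ≤ G) : Prop :=
  IsSubgraphSplitting K G G₁ G₂ h₁ h₂ ∧
    ∀ (H₁ H₂ : SimpleGraph V) (hH₁ : H₁ ≤ G₁) (hH₂ : H₂ ≤ G₂),
      toricIdeal K G = extIdeal K G H₁ (hH₁.trans h₁) + extIdeal K G H₂ (hH₂.trans h₂) →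
      extIdeal K G H₁ (hH₁.trans h₁) = extIdeal K G G₁ h₁ ∧
        extIdeal K G H₂ (hH₂.trans h₂) = extIdeal K G G₂ h₂

/-- The wheel graph `W_{n+1}`: vertices `0, …, n-1` (the cycle `C_n`, with edges between
`i` and `(i+1) % n`) together with the universal vertex `n` joined to all cycle vertices. -/
def wheelGraph (n : ℕ) : SimpleGraph (Fin (n + 1)) :=
  SimpleGraph.fromRel fun u v =>
    (u.val < n ∧ v.val < n ∧ v.val = (u.val + 1) % n) ∨ (u.val = n ∧ v.val < n)

section Dev

open MvPolynomial

variable (K : Type) [Field K] {V : Type}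

/-- Product of variables indexed by a multiset. -/
noncomputable def toExp {α : Type} (M : Multiset α) : MvPolynomial α K :=
  (M.map X).prod

@[simp] lemma toExp_zero {α : Type} : toExp K (0 : Multiset α) = 1 := by
  simp [toExp]

@[simp] lemma toExp_cons {α : Type} (a : α) (M : Multiset α) :
    toExp K (a ::ₘ M) = X a * toExp K M := by
  simp [toExp]

lemma toExp_add {α : Type} (M N : Multiset α) :
    toExp K (M + N) = toExp K M * toExp K N := by
  simp [toExp]

/-- odd/even position entries of a list, as multisets. -/
def pairE {α : Type} : List α → Multiset α × Multiset α
  | [] => (0, 0)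
  | a :: l => (a ::ₘ (pairE l).2, (pairE l).1)

lemma altProd_eq {α : Type} (l : List α) :
    altProd K l = (toExp K (pairE l).1, toExp K (pairE l).2) := by
  induction l with
  | nil => simp [altProd, pairE]
  | cons a l ih => simp [altProd, pairE, ih]

lemma pairE_card {α : Type} (l : List α) :
    Multiset.card (pairE l).1 + Multiset.card (pairE l).2 = l.length := by
  induction l with
  | nil => simp [pairE]
  | cons a l ih => simp [pairE]; omega

lemma pairE_fst_ne_zero {α : Type} (l : List α) (h : l ≠ []) : (pairE l).1 ≠ 0 := by
  cases l with
  | nil => simp at h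
  | cons a l => simp [pairE]

variable {K}

/-- The canonical algebra map `K[x_e : e ∈ E(G)] → K[y_v : v ∈ V]`. -/
noncomputable def piMap (G : SimpleGraph V) :
    MvPolynomial G.edgeSet K →ₐ[K] MvPolynomial V K :=
  MvPolynomial.aeval (fun e : G.edgeSet => edgeMon K (e : Sym2 V))

lemma toricIdeal_eq_ker (G : SimpleGraph V) :
    toricIdeal K G = RingHom.ker (piMap (K := K) G) := rfl

@[simp] lemma edgeMon_mk (a b : V) : edgeMon K s(a, b) = X a * X b := rfl

@[simp] lemma piMap_X (G : SimpleGraph V) (e : G.edgeSet) :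
    piMap (K := K) G (X e) = edgeMon K (e : Sym2 V) := by
  simp [piMap]

lemma piMap_toExp_cons (G : SimpleGraph V) (e : G.edgeSet) (M : Multiset G.edgeSet) :
    piMap (K := K) G (toExp K (e ::ₘ M)) =
      edgeMon K (e : Sym2 V) * piMap (K := K) G (toExp K M) := by
  simp

/-- evaluation sending every vertex variable to `Polynomial.X`. -/
noncomputable def phiMap : MvPolynomial V K →ₐ[K] Polynomial K :=
  MvPolynomial.aeval (fun _ : V => Polynomial.X)

lemma phiMap_edgeMon (e : Sym2 V) :
    phiMap (K := K) (edgeMon K e) = Polynomial.X ^ 2 := by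
  induction e with
  | _ a b => simp [phiMap, sq]

lemma phiMap_piMap_toExp (G : SimpleGraph V) (M : Multiset G.edgeSet) :
    phiMap (K := K) (piMap (K := K) G (toExp K M)) =
      Polynomial.X ^ (2 * Multiset.card M) := by
  induction M using Multiset.induction_on with
  | empty => simp
  | cons e M ih =>
      rw [piMap_toExp_cons, map_mul, phiMap_edgeMon, ih]
      rw [← pow_add]
      congr 1
      simp only [Multiset.card_cons]
      omega

lemma card_eq_of_piMap_toExp_eq {G : SimpleGraph V} {M N : Multiset G.edgeSet}
    (h : piMap (K := K) G (toExp K M) = piMap (K := K) G (toExp K N)) :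
    Multiset.card M = Multiset.card N := by
  have := congrArg (phiMap (K := K)) h
  rw [phiMap_piMap_toExp, phiMap_piMap_toExp] at this
  have := congrArg Polynomial.natDegree this
  rw [Polynomial.natDegree_X_pow, Polynomial.natDegree_X_pow] at this
  omega

lemma piMap_toExp_ne_zero {G : SimpleGraph V} (M : Multiset G.edgeSet) :
    piMap (K := K) G (toExp K M) ≠ 0 := by
  intro h
  have h2 := congrArg (phiMap (K := K)) h
  rw [phiMap_piMap_toExp, map_zero] at h2
  exact pow_ne_zero _ Polynomial.X_ne_zero h2

end Dev
section Dev2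

open MvPolynomial

variable {K : Type} [Field K] {V : Type} [DecidableEq V]

/-- degree of a vertex in a multiset of edges. -/
def degC {G : SimpleGraph V} (v : V) (M : Multiset G.edgeSet) : ℕ :=
  M.countP (fun e => v ∈ Subtype.val e)

@[simp] lemma degC_zero {G : SimpleGraph V} (v : V) : degC (G := G) v 0 = 0 := rfl

lemma degC_cons {G : SimpleGraph V} (v : V) (e : G.edgeSet) (M : Multiset G.edgeSet) :
    degC v (e ::ₘ M) = degC v M + (if v ∈ (e : Sym2 V) then 1 else 0) := by
  simp [degC, Multiset.countP_cons]

/-- evaluation sending the variable of `v` to `Polynomial.X` and all others to `1`. -/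
noncomputable def psiMap (v : V) : MvPolynomial V K →ₐ[K] Polynomial K :=
  MvPolynomial.aeval (fun u : V => if u = v then Polynomial.X else 1)

lemma psiMap_piMap_toExp {G : SimpleGraph V} (v : V) (M : Multiset G.edgeSet) :
    psiMap (K := K) v (piMap (K := K) G (toExp K M)) = Polynomial.X ^ degC v M := by
  induction M using Multiset.induction_on with
  | empty => simp
  | cons e M ih =>
      rw [piMap_toExp_cons, map_mul, ih, degC_cons]
      have hd : ¬ (e : Sym2 V).IsDiag := G.not_isDiag_of_mem_edgeSet e.2
      have : psiMap (K := K) v (edgeMon K (e : Sym2 V)) =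
          Polynomial.X ^ (if v ∈ (e : Sym2 V) then 1 else 0) := by
        obtain ⟨a, b, hab⟩ : ∃ a b, (e : Sym2 V) = s(a, b) := by
          induction (e : Sym2 V) with
          | _ a b => exact ⟨a, b, rfl⟩
        rw [hab]
        rw [hab] at hd
        have hne : a ≠ b := by simpa [Sym2.isDiag_iff_proj_eq] using hd
        simp only [edgeMon_mk, map_mul, psiMap, aeval_X, Sym2.mem_iff]
        by_cases h1 : a = v <;> by_cases h2 : b = v
        · exact absurd (h1.trans h2.symm) hne
        · rw [if_pos h1, if_neg h2, if_pos (Or.inl h1.symm), mul_one, pow_one]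
        · rw [if_neg h1, if_pos h2, if_pos (Or.inr h2.symm), one_mul, pow_one]
        · rw [if_neg h1, if_neg h2, if_neg, pow_zero, one_mul]
          rintro (rfl | rfl)
          · exact h1 rfl
          · exact h2 rfl
      rw [this, ← pow_add]
      congr 1
      by_cases h : v ∈ (e : Sym2 V) <;> simp [h]
      omega

lemma degC_eq_of_piMap_toExp_eq {G : SimpleGraph V} {M N : Multiset G.edgeSet}
    (h : piMap (K := K) G (toExp K M) = piMap (K := K) G (toExp K N)) (v : V) :
    degC v M = degC v N := by
  have := congrArg (psiMap (K := K) v) h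
  rw [psiMap_piMap_toExp, psiMap_piMap_toExp] at this
  have := congrArg Polynomial.natDegree this
  rwa [Polynomial.natDegree_X_pow, Polynomial.natDegree_X_pow] at this

end Dev2
section Dev3

open MvPolynomial

variable {K : Type} [Field K] {V : Type}

lemma walkEdgeList_nil {G : SimpleGraph V} {u : V} :
    walkEdgeList (SimpleGraph.Walk.nil : G.Walk u u) = [] := rfl

lemma walkEdgeList_cons {G : SimpleGraph V} {u v w : V} (h : G.Adj u v)
    (p : G.Walk v w) :
    walkEdgeList (SimpleGraph.Walk.cons h p) =
      ⟨s(u, v), h⟩ :: walkEdgeList p := by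
  simp [walkEdgeList, List.attachWith_cons]

/-- the two claims of the parity lemma, proved simultaneously. -/
lemma piMap_walk_parity {G : SimpleGraph V} {u v : V} (p : G.Walk u v) :
    (Even p.length →
      piMap (K := K) G (toExp K (pairE (walkEdgeList p)).1) * X v =
        X u * piMap (K := K) G (toExp K (pairE (walkEdgeList p)).2)) ∧
    (¬ Even p.length →
      piMap (K := K) G (toExp K (pairE (walkEdgeList p)).1) =
        X u * X v * piMap (K := K) G (toExp K (pairE (walkEdgeList p)).2)) := by
  induction p with
  | nil => simp [walkEdgeList_nil, pairE]
  | @cons a b c h p ih =>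
      rw [walkEdgeList_cons]
      constructor
      · intro hev
        have hodd : ¬ Even p.length := by
          simp only [SimpleGraph.Walk.length_cons] at hev
          rcases Nat.even_add_one.mp hev with h'
          exact h'
        have heq := ih.2 hodd
        simp only [pairE, toExp_cons, map_mul, piMap_X]
        have he : edgeMon K (s(a, b) : Sym2 V) = X a * X b := rfl
        rw [he]
        linear_combination (-(X a : MvPolynomial V K)) * heq
      · intro hodd
        have hev : Even p.length := by
          simp only [SimpleGraph.Walk.length_cons] at hodd
          by_contra h'
          exact hodd (Nat.even_add_one.mpr h')
        have heq := ih.1 hev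
        simp only [pairE, toExp_cons, map_mul, piMap_X]
        have he : edgeMon K (s(a, b) : Sym2 V) = X a * X b := rfl
        rw [he]
        linear_combination (-(X a : MvPolynomial V K)) * heq

lemma piMap_toExp_pairE_eq {G : SimpleGraph V} {u : V} (p : G.Walk u u)
    (hev : Even p.length) :
    piMap (K := K) G (toExp K (pairE (walkEdgeList p)).1) =
      piMap (K := K) G (toExp K (pairE (walkEdgeList p)).2) := by
  have h := (piMap_walk_parity (K := K) p).1 hev
  have hX : (X u : MvPolynomial V K) ≠ 0 := MvPolynomial.X_ne_zero u
  have := h.trans (mul_comm (X u) _)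
  exact mul_right_cancel₀ hX this

lemma walkBinomial_eq_sub {G : SimpleGraph V} {u : V} (p : G.Walk u u) :
    walkBinomial K p =
      toExp K (pairE (walkEdgeList p)).1 - toExp K (pairE (walkEdgeList p)).2 := by
  rw [walkBinomial, altProd_eq]

lemma walkBinomial_mem_toricIdeal {G : SimpleGraph V} {u : V} (p : G.Walk u u)
    (hev : Even p.length) :
    walkBinomial K p ∈ toricIdeal K G := by
  rw [toricIdeal_eq_ker, RingHom.mem_ker, walkBinomial_eq_sub]
  rw [map_sub]
  rw [piMap_toExp_pairE_eq p hev, sub_self]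

/-- the set of all even closed walk binomials of `G`. -/
def WBset (K : Type) [Field K] {V : Type} (G : SimpleGraph V) :
    Set (MvPolynomial G.edgeSet K) :=
  {f | ∃ (v : V) (w : G.Walk v v), Even w.length ∧ f = walkBinomial K w}

lemma span_WBset_le {G : SimpleGraph V} :
    Ideal.span (WBset K G) ≤ toricIdeal K G := by
  rw [Ideal.span_le]
  rintro f ⟨v, w, hev, rfl⟩
  exact walkBinomial_mem_toricIdeal w hev

end Dev3
section Dev4

variable {V : Type} [DecidableEq V] {G : SimpleGraph V}

lemma mem_split {x y : V} (hxy : x ≠ y) (v : V) :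
    (if v ∈ (s(x, y) : Sym2 V) then 1 else 0) =
      (if v = x then 1 else 0) + (if v = y then 1 else 0) := by
  by_cases h1 : v = x <;> by_cases h2 : v = y
  · exact absurd (h1.symm.trans h2) hxy
  all_goals simp [Sym2.mem_iff, h1, h2, hxy, Ne.symm hxy]

lemma degC_pos_exists {v : V} {M : Multiset G.edgeSet} (h : 0 < degC v M) :
    ∃ e ∈ M, v ∈ (e : Sym2 V) := by
  unfold degC at h
  obtain ⟨e, he, hv⟩ := Multiset.countP_pos.mp h
  exact ⟨e, he, hv⟩

lemma walk_inner : ∀ (n : ℕ) (A B : Multiset G.edgeSet) (c v₀ : V),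
    Multiset.card A + Multiset.card B ≤ n →
    (∀ v, degC v B = degC v A + (if v = v₀ then 1 else 0) + (if v = c then 1 else 0)) →
    ∃ p : G.Walk c v₀, ¬ Even p.length ∧ (pairE (walkEdgeList p)).1 ≤ B ∧
      (pairE (walkEdgeList p)).2 ≤ A := by
  intro n
  induction n with
  | zero =>
      intro A B c v₀ hn hinv
      exfalso
      have h1 : 0 < degC c B := by
        have := hinv c
        simp at this
        omega
      obtain ⟨b, hbB, -⟩ := degC_pos_exists h1
      have : 0 < Multiset.card B := Multiset.card_pos.mpr (fun h => by simp [h] at hbB)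
      omega
  | succ n ih =>
      intro A B c v₀ hn hinv
      have h1 : 0 < degC c B := by
        have := hinv c
        simp at this
        omega
      obtain ⟨b, hbB, hcb⟩ := degC_pos_exists h1
      set c' := Sym2.Mem.other' hcb with hc'def
      have hbedge : s(c, c') = (b : Sym2 V) := Sym2.other_spec' hcb
      have hadj : G.Adj c c' := by
        rw [← SimpleGraph.mem_edgeSet, hbedge]; exact b.2
      by_cases hc' : c' = v₀
      · subst hc'
        refine ⟨SimpleGraph.Walk.cons hadj SimpleGraph.Walk.nil, by simp, ?_, ?_⟩
        · rw [walkEdgeList_cons, walkEdgeList_nil]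
          have hb : (⟨s(c, c'), hadj⟩ : G.edgeSet) = b := Subtype.ext hbedge
          rw [hb]
          simpa [pairE] using Multiset.singleton_le.mpr hbB
        · rw [walkEdgeList_cons, walkEdgeList_nil]
          exact Multiset.zero_le _
      · -- find an A-edge at c'
        have hc'c : c' ≠ c := hadj.ne'
        have h2 : 0 < degC c' A := by
          have e1 := hinv c'
          have e2 : degC c' B = degC c' (B.erase b) + 1 := by
            conv_lhs => rw [← Multiset.cons_erase hbB]
            rw [degC_cons]
            have : c' ∈ (b : Sym2 V) := by
              rw [← hbedge]; exact Sym2.mem_mk_right c c'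
            simp [this]
          have h3 : degC c' B ≥ 1 := by omega
          rw [if_neg hc', if_neg hc'c] at e1
          omega
        obtain ⟨a, haA, hc'a⟩ := degC_pos_exists h2
        set c'' := Sym2.Mem.other' hc'a with hc''def
        have haedge : s(c', c'') = (a : Sym2 V) := Sym2.other_spec' hc'a
        have hadj2 : G.Adj c' c'' := by
          rw [← SimpleGraph.mem_edgeSet, haedge]; exact a.2
        -- the new invariant
        have hinv' : ∀ v, degC v (B.erase b) = degC v (A.erase a)
            + (if v = v₀ then 1 else 0) + (if v = c'' then 1 else 0) := by
          intro v
          have e1 := hinv v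
          have e2 : degC v B = degC v (B.erase b)
              + ((if v = c then 1 else 0) + (if v = c' then 1 else 0)) := by
            conv_lhs => rw [← Multiset.cons_erase hbB]
            rw [degC_cons, ← hbedge, mem_split hadj.ne v]
          have e3 : degC v A = degC v (A.erase a)
              + ((if v = c' then 1 else 0) + (if v = c'' then 1 else 0)) := by
            conv_lhs => rw [← Multiset.cons_erase haA]
            rw [degC_cons, ← haedge, mem_split hadj2.ne v]
          split_ifs at e1 e2 e3 ⊢ <;> omega
        have hcard : Multiset.card (A.erase a) + Multiset.card (B.erase b) ≤ n := by
          have ha' := Multiset.card_erase_of_mem haA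
          have hb' := Multiset.card_erase_of_mem hbB
          simp only [Nat.pred_eq_sub_one] at ha' hb'
          have : 0 < Multiset.card A := Multiset.card_pos.mpr
            (fun h => by simp [h] at haA)
          have : 0 < Multiset.card B := Multiset.card_pos.mpr
            (fun h => by simp [h] at hbB)
          omega
        obtain ⟨p', hodd', h1', h2'⟩ := ih (A.erase a) (B.erase b) c'' v₀ hcard hinv'
        refine ⟨SimpleGraph.Walk.cons hadj (SimpleGraph.Walk.cons hadj2 p'), ?_, ?_, ?_⟩
        · simpa [Nat.even_add_one] using hodd'
        · rw [walkEdgeList_cons, walkEdgeList_cons]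
          have hb : (⟨s(c, c'), hadj⟩ : G.edgeSet) = b := Subtype.ext hbedge
          rw [hb]
          show b ::ₘ (pairE (walkEdgeList p')).1 ≤ B
          calc b ::ₘ (pairE (walkEdgeList p')).1 ≤ b ::ₘ B.erase b :=
                Multiset.cons_le_cons b h1'
            _ = B := Multiset.cons_erase hbB
        · rw [walkEdgeList_cons, walkEdgeList_cons]
          have ha : (⟨s(c', c''), hadj2⟩ : G.edgeSet) = a := Subtype.ext haedge
          rw [ha]
          show a ::ₘ (pairE (walkEdgeList p')).2 ≤ A
          calc a ::ₘ (pairE (walkEdgeList p')).2 ≤ a ::ₘ A.erase a :=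
                Multiset.cons_le_cons a h2'
            _ = A := Multiset.cons_erase haA

lemma exists_alternating_walk (A B : Multiset G.edgeSet) (hA : A ≠ 0)
    (hdeg : ∀ v, degC v A = degC v B) :
    ∃ (v₀ : V) (p : G.Walk v₀ v₀), Even p.length ∧ p.length ≠ 0 ∧
      (pairE (walkEdgeList p)).1 ≤ A ∧ (pairE (walkEdgeList p)).2 ≤ B := by
  obtain ⟨a, haA⟩ := Multiset.exists_mem_of_ne_zero hA
  obtain ⟨x, y, hab⟩ : ∃ x y, (a : Sym2 V) = s(x, y) := by
    induction (a : Sym2 V) with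
    | _ x y => exact ⟨x, y, rfl⟩
  have hadj : G.Adj x y := by
    rw [← SimpleGraph.mem_edgeSet, ← hab]; exact a.2
  have hinv : ∀ v, degC v B = degC v (A.erase a)
      + (if v = x then 1 else 0) + (if v = y then 1 else 0) := by
    intro v
    have e1 := hdeg v
    have e2 : degC v A = degC v (A.erase a)
        + ((if v = x then 1 else 0) + (if v = y then 1 else 0)) := by
      conv_lhs => rw [← Multiset.cons_erase haA]
      rw [degC_cons, hab, mem_split hadj.ne v]
    split_ifs at e1 e2 ⊢ <;> omega
  obtain ⟨p, hodd, h1, h2⟩ := walk_inner (Multiset.card (A.erase a) + Multiset.card B)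
    (A.erase a) B y x le_rfl hinv
  refine ⟨x, SimpleGraph.Walk.cons hadj p, ?_, by simp, ?_, ?_⟩
  · simpa [Nat.even_add_one] using hodd
  · rw [walkEdgeList_cons]
    have ha : (⟨s(x, y), hadj⟩ : G.edgeSet) = a := Subtype.ext hab.symm
    rw [ha]
    show a ::ₘ (pairE (walkEdgeList p)).2 ≤ A
    calc a ::ₘ (pairE (walkEdgeList p)).2 ≤ a ::ₘ A.erase a :=
          Multiset.cons_le_cons a h2
      _ = A := Multiset.cons_erase haA
  · rw [walkEdgeList_cons]
    exact h1

end Dev4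
section Dev5

open MvPolynomial

variable {K : Type} [Field K] {V : Type} [DecidableEq V] {G : SimpleGraph V}

lemma walkEdgeList_length {u v : V} (p : G.Walk u v) :
    (walkEdgeList p).length = p.length := by
  rw [walkEdgeList, List.length_attachWith, SimpleGraph.Walk.length_edges]

lemma binomial_mem_span : ∀ (n : ℕ) (M N : Multiset G.edgeSet),
    Multiset.card M + Multiset.card N ≤ n →
    piMap (K := K) G (toExp K M) = piMap (K := K) G (toExp K N) →
    toExp K M - toExp K N ∈ Ideal.span (WBset K G) := by
  intro n
  induction n with
  | zero =>
      intro M N hn h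
      have h0 : Multiset.card M = 0 := by omega
      have h1 : Multiset.card N = 0 := by omega
      rw [Multiset.card_eq_zero] at h0 h1
      subst h0; subst h1
      simp
  | succ n ih =>
      intro M N hn h
      by_cases hM : M = 0
      · have hcard := card_eq_of_piMap_toExp_eq h
        subst hM
        simp only [Multiset.card_zero] at hcard
        have : N = 0 := Multiset.card_eq_zero.mp hcard.symm
        subst this
        simp
      · have hdeg := degC_eq_of_piMap_toExp_eq h
        obtain ⟨v₀, p, hev, hlen, hO, hE⟩ := exists_alternating_walk M N hM hdeg
        set O := (pairE (walkEdgeList p)).1 with hOdef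
        set E := (pairE (walkEdgeList p)).2 with hEdef
        have hOne : O ≠ 0 := by
          apply pairE_fst_ne_zero
          intro hnil
          apply hlen
          rw [← walkEdgeList_length p, hnil]
          rfl
        have hOcard : 0 < Multiset.card O := Multiset.card_pos.mpr hOne
        have hMO : M - O + O = M := tsub_add_cancel_of_le hO
        have hNE : N - E + E = N := tsub_add_cancel_of_le hE
        have hOE : piMap (K := K) G (toExp K O) = piMap (K := K) G (toExp K E) :=
          piMap_toExp_pairE_eq p hev
        -- the split identity
        have hsplit : toExp K M - toExp K N =
            toExp K (M - O) * (toExp K O - toExp K E) +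
              toExp K E * (toExp K (M - O) - toExp K (N - E)) := by
          conv_lhs => rw [← hMO, ← hNE, toExp_add, toExp_add]
          ring
        have hmem1 : toExp K O - toExp K E ∈ WBset K G :=
          ⟨v₀, p, hev, by rw [walkBinomial_eq_sub]⟩
        -- cancel to recurse
        have hcancel : piMap (K := K) G (toExp K (M - O)) =
            piMap (K := K) G (toExp K (N - E)) := by
          have h1 : piMap (K := K) G (toExp K (M - O)) * piMap (K := K) G (toExp K E) =
              piMap (K := K) G (toExp K (N - E)) * piMap (K := K) G (toExp K E) := by
            calc piMap (K := K) G (toExp K (M - O)) * piMap (K := K) G (toExp K E)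
                = piMap (K := K) G (toExp K (M - O)) * piMap (K := K) G (toExp K O) := by
                  rw [hOE]
              _ = piMap (K := K) G (toExp K M) := by rw [← map_mul, ← toExp_add, hMO]
              _ = piMap (K := K) G (toExp K N) := h
              _ = piMap (K := K) G (toExp K (N - E)) * piMap (K := K) G (toExp K E) := by
                  rw [← map_mul, ← toExp_add, hNE]
          exact mul_right_cancel₀ (piMap_toExp_ne_zero E) h1
        have hcard2 : Multiset.card (M - O) + Multiset.card (N - E) ≤ n := by
          have c1 := Multiset.card_sub hO
          have c2 := Multiset.card_sub hE
          have c3 := Multiset.card_le_card hO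
          have c4 := Multiset.card_le_card hE
          omega
        rw [hsplit]
        exact Ideal.add_mem _
          (Ideal.mul_mem_left _ _ (Ideal.subset_span hmem1))
          (Ideal.mul_mem_left _ _ (ih (M - O) (N - E) hcard2 hcancel))

end Dev5
section Dev6

open MvPolynomial

variable {K : Type} [Field K] {V : Type} [DecidableEq V] {G : SimpleGraph V}

/-- the degree finsupp of an edge. -/
noncomputable def s2f (e : Sym2 V) : V →₀ ℕ :=
  Sym2.lift ⟨fun a b => Finsupp.single a 1 + Finsupp.single b 1,
    fun a b => add_comm _ _⟩ e

/-- total vertex degree finsupp of a multiset of edges. -/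
noncomputable def vdegM (M : Multiset G.edgeSet) : V →₀ ℕ :=
  (M.map (fun e => s2f (Subtype.val e))).sum

lemma edgeMon_eq_monomial (e : Sym2 V) :
    edgeMon K e = monomial (s2f e) (1 : K) := by
  induction e with
  | _ a b =>
      show X a * X b = monomial (Finsupp.single a 1 + Finsupp.single b 1) (1 : K)
      rw [X, X, monomial_mul, one_mul]

lemma vdegM_cons (e : G.edgeSet) (M : Multiset G.edgeSet) :
    vdegM (e ::ₘ M) = s2f (Subtype.val e) + vdegM M := by
  simp [vdegM]

lemma piMap_toExp_eq_monomial (M : Multiset G.edgeSet) :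
    piMap (K := K) G (toExp K M) = monomial (vdegM M) (1 : K) := by
  induction M using Multiset.induction_on with
  | empty => simp [vdegM]
  | cons e M ih =>
      rw [piMap_toExp_cons, ih, edgeMon_eq_monomial, monomial_mul, one_mul, vdegM_cons]

lemma toExp_toMultiset (d : G.edgeSet →₀ ℕ) :
    toExp K d.toMultiset = monomial d (1 : K) := by
  induction d using Finsupp.induction with
  | zero => simp
  | single_add a n d _ _ ih =>
      rw [Finsupp.toMultiset_add, toExp_add, ih, Finsupp.toMultiset_single,
        monomial_single_add]
      congr 1
      rw [toExp, Multiset.map_nsmul]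
      simp only [Multiset.map_singleton]
      rw [Multiset.nsmul_singleton, Multiset.prod_replicate]

lemma piMap_monomial (d : G.edgeSet →₀ ℕ) (c : K) :
    piMap (K := K) G (monomial d c) = monomial (vdegM d.toMultiset) c := by
  have h1 : (monomial d c : MvPolynomial G.edgeSet K) = C c * monomial d 1 := by
    rw [C_mul_monomial, mul_one]
  rw [h1, map_mul, ← toExp_toMultiset, piMap_toExp_eq_monomial]
  have : piMap (K := K) G (C c) = C c := by simp [piMap]
  rw [this, C_mul_monomial, mul_one]

lemma ker_le_span : ∀ (n : ℕ) (f : MvPolynomial G.edgeSet K), f.support.card ≤ n →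
    piMap (K := K) G f = 0 → f ∈ Ideal.span (WBset K G) := by
  intro n
  induction n with
  | zero =>
      intro f hn hf
      have : f.support = ∅ := Finset.card_eq_zero.mp (Nat.le_zero.mp hn)
      rw [MvPolynomial.support_eq_empty.mp this]
      exact Ideal.zero_mem _
  | succ n ih =>
      intro f hn hf
      by_cases hf0 : f = 0
      · rw [hf0]; exact Ideal.zero_mem _
      obtain ⟨d₀, hd₀⟩ := MvPolynomial.support_nonempty.mpr hf0
      -- find a partner monomial with the same image
      have hsum : piMap (K := K) G f =
          ∑ d ∈ f.support, monomial (vdegM d.toMultiset) (coeff d f) := by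
        conv_lhs => rw [f.as_sum]
        rw [map_sum]
        exact Finset.sum_congr rfl (fun d _ => piMap_monomial d (coeff d f))
      have hcoeff : ∑ d ∈ f.support,
          (if vdegM (G := G) d.toMultiset = vdegM (G := G) d₀.toMultiset
            then coeff d f else 0) = 0 := by
        have := congrArg (coeff (vdegM (G := G) d₀.toMultiset)) hf
        rw [hsum] at this
        rw [coeff_sum] at this
        simpa [coeff_monomial] using this
      have hpartner : ∃ d' ∈ f.support, d' ≠ d₀ ∧
          vdegM (G := G) d'.toMultiset = vdegM (G := G) d₀.toMultiset := by
        by_contra hno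
        push_neg at hno
        have : ∑ d ∈ f.support,
            (if vdegM (G := G) d.toMultiset = vdegM (G := G) d₀.toMultiset
              then coeff d f else 0) = coeff d₀ f := by
          rw [Finset.sum_eq_single d₀ (fun b hb hbne => if_neg (hno b hb hbne))
            (fun h => absurd hd₀ h), if_pos rfl]
        rw [hcoeff] at this
        exact (MvPolynomial.mem_support_iff.mp hd₀) this.symm
      obtain ⟨d', hd'supp, hd'ne, hw⟩ := hpartner
      set c₀ := coeff d₀ f with hc₀
      set binom : MvPolynomial G.edgeSet K := monomial d₀ 1 - monomial d' 1 with hbinom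
      set g := f - C c₀ * binom with hg
      have hbinommem : binom ∈ Ideal.span (WBset K G) := by
        rw [hbinom, ← toExp_toMultiset, ← toExp_toMultiset]
        apply binomial_mem_span (Multiset.card d₀.toMultiset + Multiset.card d'.toMultiset)
          _ _ le_rfl
        rw [piMap_toExp_eq_monomial, piMap_toExp_eq_monomial, hw]
      have hπg : piMap (K := K) G g = 0 := by
        rw [hg, map_sub, hf, map_mul, hbinom, map_sub, piMap_monomial, piMap_monomial, hw]
        simp
      have hsupp : g.support ⊆ f.support.erase d₀ := by
        intro x hx
        have hcg : coeff x g ≠ 0 := MvPolynomial.mem_support_iff.mp hx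
        rw [hg, hbinom] at hcg
        rw [coeff_sub, mul_sub, coeff_sub, coeff_C_mul, coeff_C_mul,
          coeff_monomial, coeff_monomial] at hcg
        rw [Finset.mem_erase]
        constructor
        · rintro rfl
          rw [if_pos rfl, if_neg hd'ne, mul_one, mul_zero, sub_zero, sub_self] at hcg
          exact hcg rfl
        · rw [MvPolynomial.mem_support_iff]
          intro hfx
          by_cases h1 : d₀ = x
          · exact absurd hfx (h1 ▸ MvPolynomial.mem_support_iff.mp hd₀)
          by_cases h2 : d' = x
          · exact absurd hfx (h2 ▸ MvPolynomial.mem_support_iff.mp hd'supp)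
          apply hcg
          rw [hfx, if_neg h1, if_neg h2]
          simp
      have hcard : g.support.card ≤ n := by
        have := Finset.card_le_card hsupp
        have h2 : (f.support.erase d₀).card < f.support.card :=
          Finset.card_erase_lt_of_mem hd₀
        omega
      have hgmem : g ∈ Ideal.span (WBset K G) := ih g hcard hπg
      have : f = g + C c₀ * binom := by rw [hg]; ring
      rw [this]
      exact Ideal.add_mem _ hgmem (Ideal.mul_mem_left _ _ hbinommem)

theorem toricIdeal_eq_span_WBset : toricIdeal K G = Ideal.span (WBset K G) :=
  le_antisymm (fun f hf => ker_le_span f.support.card f le_rfl hf) span_WBset_le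

end Dev6
section Dev7

open MvPolynomial

variable {K : Type} [Field K] {V : Type}

lemma attachWith_congr {α : Type} {P : α → Prop} {l₁ l₂ : List α} (h : l₁ = l₂)
    (h₁ : ∀ e ∈ l₁, P e) :
    l₁.attachWith P h₁ = l₂.attachWith P (fun e he => h₁ e (h ▸ he)) := by
  subst h; rfl

lemma attachWith_map_inclusion {P Q : Set (Sym2 V)} (hPQ : P ⊆ Q) :
    ∀ (l : List (Sym2 V)) (h : ∀ e ∈ l, e ∈ P),
    (l.attachWith (· ∈ P) h).map (Set.inclusion hPQ) =
      l.attachWith (· ∈ Q) (fun e he => hPQ (h e he)) := by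
  intro l
  induction l with
  | nil => intro h; rfl
  | cons a l ih =>
      intro h
      rw [List.attachWith_cons, List.attachWith_cons, List.map_cons, ih]

lemma altProd_map {α β : Type} (g : α → β) (l : List α) :
    altProd K (l.map g) = (rename g (altProd K l).1, rename g (altProd K l).2) := by
  induction l with
  | nil => simp [altProd]
  | cons a l ih => simp [altProd, ih]

lemma walkEdgeList_transfer {H G : SimpleGraph V} (h : H ≤ G) {u v : V}
    (w : H.Walk u v) (hw : ∀ e ∈ w.edges, e ∈ G.edgeSet) :
    walkEdgeList (w.transfer G hw) =
      (walkEdgeList w).map (Set.inclusion (SimpleGraph.edgeSet_mono h)) := by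
  rw [walkEdgeList, walkEdgeList,
    attachWith_congr (w.edges_transfer hw) (fun _ he => (w.transfer G hw).edges_subset_edgeSet he),
    attachWith_map_inclusion (SimpleGraph.edgeSet_mono h) w.edges
      (fun e he => w.edges_subset_edgeSet he)]

lemma walkBinomial_transfer {H G : SimpleGraph V} (h : H ≤ G) {u : V}
    (w : H.Walk u u) (hw : ∀ e ∈ w.edges, e ∈ G.edgeSet) :
    walkBinomial K (w.transfer G hw) =
      rename (Set.inclusion (SimpleGraph.edgeSet_mono h)) (walkBinomial K w) := by
  rw [walkBinomial, walkBinomial, walkEdgeList_transfer h w hw, altProd_map, map_sub]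

lemma extIdeal_eq_span [DecidableEq V] {G H : SimpleGraph V} (h : H ≤ G) :
    extIdeal K G H h = Ideal.span
      ((rename (Set.inclusion (SimpleGraph.edgeSet_mono h)) :
        MvPolynomial H.edgeSet K →ₐ[K] MvPolynomial G.edgeSet K) '' WBset K H) := by
  rw [extIdeal, toricIdeal_eq_span_WBset, Ideal.map_span]

lemma extIdeal_le_toricIdeal {G H : SimpleGraph V} (h : H ≤ G) :
    extIdeal K G H h ≤ toricIdeal K G := by
  rw [extIdeal]
  apply Ideal.map_le_iff_le_comap.mpr
  intro x hx
  simp only [toricIdeal, Ideal.mem_comap, RingHom.mem_ker] at hx ⊢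
  rw [aeval_rename]
  have hfun : ((fun e : G.edgeSet => edgeMon K (e : Sym2 V)) ∘
      Set.inclusion (SimpleGraph.edgeSet_mono h)) =
      fun e : H.edgeSet => edgeMon K (e : Sym2 V) := by
    funext e
    rfl
  rw [hfun]
  exact hx

lemma extIdeal_congr {G H H' : SimpleGraph V} (hH : H ≤ G) (hH' : H' ≤ G)
    (e : H = H') : extIdeal K G H hH = extIdeal K G H' hH' := by
  subst e; rfl

lemma walkBinomial_mem_extIdeal {G H : SimpleGraph V} (h : H ≤ G) {u : V}
    (w : G.Walk u u) (hev : Even w.length) (hw : ∀ e ∈ w.edges, e ∈ H.edgeSet) :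
    walkBinomial K w ∈ extIdeal K G H h := by
  have hw' : ∀ e ∈ (w.transfer H hw).edges, e ∈ G.edgeSet := by
    rw [w.edges_transfer hw]
    exact fun e he => w.edges_subset_edgeSet he
  have heq : (w.transfer H hw).transfer G hw' = w := by
    rw [SimpleGraph.Walk.transfer_transfer]
    exact SimpleGraph.Walk.transfer_self w
  have h2 : walkBinomial K w =
      rename (Set.inclusion (SimpleGraph.edgeSet_mono h))
        (walkBinomial K (w.transfer H hw)) := by
    rw [← walkBinomial_transfer h (w.transfer H hw) hw', heq]
  rw [h2, extIdeal]
  exact Ideal.mem_map_of_mem _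
    (walkBinomial_mem_toricIdeal _ (by rwa [SimpleGraph.Walk.length_transfer]))

end Dev7
section Dev8

variable {R : Type} [CommRing R]

lemma exists_minimal_span_finset :
    ∀ (n : ℕ) (S₀ : Finset R) (I : Ideal R), S₀.card ≤ n → Ideal.span ↑S₀ = I →
    ∃ Sf : Finset R, (↑Sf : Set R) ⊆ ↑S₀ ∧ Ideal.span ↑Sf = I ∧
      ∀ T : Set R, T ⊂ ↑Sf → Ideal.span T ≠ I := by
  intro n
  induction n with
  | zero =>
      intro S₀ I hcard hspan
      have h0 : S₀ = ∅ := Finset.card_eq_zero.mp (Nat.le_zero.mp hcard)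
      subst h0
      refine ⟨∅, subset_rfl, hspan, fun T hT _ => ?_⟩
      rw [Finset.coe_empty] at hT
      exact hT.ne (Set.subset_empty_iff.mp hT.subset)
  | succ n ih =>
      intro S₀ I hcard hspan
      by_cases hmin : ∃ T : Set R, T ⊂ ↑S₀ ∧ Ideal.span T = I
      · obtain ⟨T, hT, hTspan⟩ := hmin
        have hTfin : T.Finite := S₀.finite_toSet.subset hT.subset
        have hcoe : ↑hTfin.toFinset = T := hTfin.coe_toFinset
        have hsub : hTfin.toFinset ⊆ S₀ := by
          rw [← Finset.coe_subset, hcoe]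
          exact hT.subset
        have hne : hTfin.toFinset ≠ S₀ := by
          intro h
          exact hT.ne (by rw [← hcoe, h])
        have hlt : hTfin.toFinset.card < S₀.card :=
          Finset.card_lt_card (Finset.ssubset_iff_subset_ne.mpr ⟨hsub, hne⟩)
        obtain ⟨Sf, h1, h2, h3⟩ := ih hTfin.toFinset I (by omega)
          (by rw [hcoe]; exact hTspan)
        refine ⟨Sf, ?_, h2, h3⟩
        rw [hcoe] at h1
        exact h1.trans hT.subset
      · push_neg at hmin
        exact ⟨S₀, subset_rfl, hspan, fun T hT hTspan => hmin T hT hTspan⟩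

lemma span_eq_finite_subset [IsNoetherianRing R] (T : Set R) (I : Ideal R)
    (h : Ideal.span T = I) :
    ∃ T₀ : Finset R, (↑T₀ : Set R) ⊆ T ∧ Ideal.span ↑T₀ = I := by
  classical
  obtain ⟨Γ, hΓ⟩ := IsNoetherian.noetherian I
  have hmem : ∀ g : Γ, ∃ Tg : Finset R, (↑Tg : Set R) ⊆ T ∧
      (g : R) ∈ Ideal.span (↑Tg : Set R) := by
    intro g
    have hgI : (g : R) ∈ I := by
      rw [← hΓ]
      exact Submodule.subset_span g.2
    rw [← h] at hgI
    exact Submodule.mem_span_finite_of_mem_span hgI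
  choose F hFsub hFmem using hmem
  refine ⟨Γ.attach.biUnion F, ?_, ?_⟩
  · intro x hx
    simp only [Finset.coe_biUnion, Set.mem_iUnion, Finset.mem_coe] at hx
    obtain ⟨g, -, hg⟩ := hx
    exact hFsub g hg
  · apply le_antisymm
    · rw [← h]
      apply Ideal.span_mono
      intro x hx
      simp only [Finset.coe_biUnion, Set.mem_iUnion, Finset.mem_coe] at hx
      obtain ⟨g, -, hg⟩ := hx
      exact hFsub g hg
    · rw [← hΓ]
      rw [Submodule.span_le]
      intro g hg
      have := hFmem ⟨g, hg⟩
      apply Ideal.span_mono _ this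
      intro x hx
      simp only [Finset.coe_biUnion, Set.mem_iUnion, Finset.mem_coe]
      exact ⟨⟨g, hg⟩, Finset.mem_attach _ _, hx⟩

lemma exists_minimal_span_subset [IsNoetherianRing R] (T : Set R) (I : Ideal R)
    (h : Ideal.span T = I) :
    ∃ Sf : Finset R, (↑Sf : Set R) ⊆ T ∧ Ideal.span ↑Sf = I ∧
      ∀ T' : Set R, T' ⊂ ↑Sf → Ideal.span T' ≠ I := by
  obtain ⟨T₀, hT₀, hspan⟩ := span_eq_finite_subset T I h
  obtain ⟨Sf, h1, h2, h3⟩ := exists_minimal_span_finset T₀.card T₀ I le_rfl hspan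
  exact ⟨Sf, h1.trans hT₀, h2, h3⟩

end Dev8

/-- Let `I_G = I_{G₁} + I_{G₂}` be a reduced splitting of `I_G`.
Then there are a set `F ⊆ E(G)` and a minimal generating set of binomials `S` of `I_G`
such that `I_{G₁} = I_{G_S^F}` and `I_{G₂} = I_{G∖F}`. -/
theorem reducedSplitting_eq_GSF_splitting
    (K : Type) [Field K] {V : Type} [Fintype V] [DecidableEq V]
    (G : SimpleGraph V) (hG : G.Connected)
    (G₁ G₂ : SimpleGraph V) (h₁ : G₁ ≤ G) (h₂ : G₂ ≤ G)
    (hred : IsReducedSplitting K G G₁ G₂ h₁ h₂) :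
    ∃ (F : Set (Sym2 V)) (_ : F ⊆ G.edgeSet) (S : BinomialWalkGens K G),
      S.IsMinGens (toricIdeal K G) ∧
      extIdeal K G G₁ h₁ = extIdeal K G (S.GSF F) (S.GSF_le F) ∧
      extIdeal K G G₂ h₂ = extIdeal K G (G.deleteEdges F) (SimpleGraph.deleteEdges_le _) := by
  classical
  obtain ⟨⟨hsumGG, hne₁, hne₂⟩, hredmin⟩ := hred
  -- a generating set of `I_G` made of binomials coming from `G₁` or `G₂`
  have hspan : Ideal.span
      ((⇑(rename (Set.inclusion (SimpleGraph.edgeSet_mono h₁)) :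
          MvPolynomial G₁.edgeSet K →ₐ[K] MvPolynomial G.edgeSet K) '' WBset K G₁) ∪
        (⇑(rename (Set.inclusion (SimpleGraph.edgeSet_mono h₂)) :
          MvPolynomial G₂.edgeSet K →ₐ[K] MvPolynomial G.edgeSet K) '' WBset K G₂)) =
      toricIdeal K G := by
    rw [Ideal.span_union, ← extIdeal_eq_span h₁, ← extIdeal_eq_span h₂, hsumGG]
    exact (Submodule.add_eq_sup _ _).symm
  obtain ⟨Sf, hSfsub, hSfspan, hSfmin⟩ := exists_minimal_span_subset _ _ hspan
  -- choose a walk for each element of `Sf`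
  have hchoice : ∀ f ∈ Sf, ∃ (v : V) (w : G.Walk v v), Even w.length ∧
      walkBinomial K w = f ∧
      ((∀ e ∈ w.edges, e ∈ G₁.edgeSet) ∨ (∀ e ∈ w.edges, e ∈ G₂.edgeSet)) := by
    intro f hf
    rcases hSfsub hf with h | h
    · obtain ⟨g, ⟨v, w, hev, rfl⟩, rfl⟩ := h
      refine ⟨v, w.transfer G (fun e he =>
        SimpleGraph.edgeSet_mono h₁ (w.edges_subset_edgeSet he)), ?_, ?_, Or.inl ?_⟩
      · rwa [SimpleGraph.Walk.length_transfer]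
      · exact walkBinomial_transfer h₁ w _
      · rw [SimpleGraph.Walk.edges_transfer]
        exact fun e he => w.edges_subset_edgeSet he
    · obtain ⟨g, ⟨v, w, hev, rfl⟩, rfl⟩ := h
      refine ⟨v, w.transfer G (fun e he =>
        SimpleGraph.edgeSet_mono h₂ (w.edges_subset_edgeSet he)), ?_, ?_, Or.inr ?_⟩
      · rwa [SimpleGraph.Walk.length_transfer]
      · exact walkBinomial_transfer h₂ w _
      · rw [SimpleGraph.Walk.edges_transfer]
        exact fun e he => w.edges_subset_edgeSet he
  choose vfun wfun heven hbin hside using hchoice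
  let eqv : Fin Sf.card ≃ {x // x ∈ Sf} := Sf.equivFin.symm
  -- the binomial walk generators
  let S : BinomialWalkGens K G :=
    ⟨Sf.card, fun i => vfun _ (eqv i).2, fun i => wfun _ (eqv i).2,
      fun i => heven _ (eqv i).2⟩
  have hwalk_bin : ∀ i, walkBinomial K (S.walk i) = ((eqv i : {x // x ∈ Sf}) : _) :=
    fun i => hbin _ (eqv i).2
  have hwalk_exists : ∀ f ∈ Sf, ∃ i, walkBinomial K (S.walk i) = f := by
    intro f hf
    refine ⟨eqv.symm ⟨f, hf⟩, ?_⟩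
    rw [hwalk_bin]
    simp
  have hbinomials : S.binomials = ↑Sf := by
    ext f
    constructor
    · rintro ⟨i, rfl⟩
      show walkBinomial K (S.walk i) ∈ ↑Sf
      rw [hwalk_bin]
      exact (eqv i).2
    · intro hf
      obtain ⟨i, hi⟩ := hwalk_exists f hf
      exact ⟨i, hi⟩
  have hIsMin : S.IsMinGens (toricIdeal K G) := by
    refine ⟨?_, ?_, ?_⟩
    · rintro f ⟨i, rfl⟩
      exact ⟨S.base i, S.walk i, S.even i, rfl⟩
    · rw [hbinomials]; exact hSfspan
    · rw [hbinomials]; exact hSfmin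
  -- the edge set F
  set F : Set (Sym2 V) := G.edgeSet \ G₂.edgeSet with hFdef
  have hFsub : F ⊆ G.edgeSet := Set.diff_subset
  have hdelEq : G.deleteEdges F = G₂ := by
    ext a b
    simp only [SimpleGraph.deleteEdges_adj, hFdef, Set.mem_diff, SimpleGraph.mem_edgeSet]
    have hle := @h₂ a b
    tauto
  have hwalk_side : ∀ i, (∀ e ∈ (S.walk i).edges, e ∈ G₁.edgeSet) ∨
      (∀ e ∈ (S.walk i).edges, e ∈ G₂.edgeSet) := fun i => hside _ (eqv i).2
  have hG1walk : ∀ i : Fin S.r, (∃ e ∈ (S.walk i).edges, e ∈ F) →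
      ∀ x ∈ (S.walk i).edges, x ∈ G₁.edgeSet := by
    intro i ⟨e, hei, heF⟩ x hx
    rcases hwalk_side i with hs | hs
    · exact hs x hx
    · exact absurd (hs e hei) heF.2
  have hGSF_le_G₁ : S.GSF F ≤ G₁ := by
    rw [BinomialWalkGens.GSF]
    apply iSup₂_le
    intro e he
    intro u w hadj
    rw [BinomialWalkGens.GSe, SimpleGraph.fromEdgeSet_adj] at hadj
    obtain ⟨hmem, hne⟩ := hadj
    simp only [Set.mem_iUnion, Set.mem_setOf_eq] at hmem
    obtain ⟨i, hei, hx⟩ := hmem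
    exact G₁.mem_edgeSet.mp (hG1walk i ⟨e, hei, he⟩ _ hx)
  have hGSF_edge : ∀ i : Fin S.r, (∃ e ∈ (S.walk i).edges, e ∈ F) →
      ∀ x ∈ (S.walk i).edges, x ∈ (S.GSF F).edgeSet := by
    rintro i ⟨e, hei, heF⟩ x hx
    have h1 : x ∈ (S.GSe e).edgeSet := by
      rw [BinomialWalkGens.GSe, SimpleGraph.edgeSet_fromEdgeSet]
      constructor
      · simp only [Set.mem_iUnion, Set.mem_setOf_eq]
        exact ⟨i, hei, hx⟩
      · exact G.not_isDiag_of_mem_edgeSet ((S.walk i).edges_subset_edgeSet hx)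
    have h2 : S.GSe e ≤ S.GSF F := by
      rw [BinomialWalkGens.GSF]
      exact le_iSup₂ (f := fun e _ => S.GSe e) e heF
    exact SimpleGraph.edgeSet_mono h2 h1
  -- the sum decomposition
  have hsum : toricIdeal K G =
      extIdeal K G (S.GSF F) (hGSF_le_G₁.trans h₁) +
        extIdeal K G (G.deleteEdges F) ((le_of_eq hdelEq).trans h₂) := by
    apply le_antisymm
    · rw [← hSfspan, Ideal.span_le]
      intro f hf
      obtain ⟨i, rfl⟩ := hwalk_exists f hf
      by_cases hcase : ∃ e ∈ (S.walk i).edges, e ∈ F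
      · exact Submodule.mem_sup_left
          (walkBinomial_mem_extIdeal _ _ (S.even i) (hGSF_edge i hcase))
      · push_neg at hcase
        apply Submodule.mem_sup_right
        apply walkBinomial_mem_extIdeal _ _ (S.even i)
        intro e he
        rw [hdelEq]
        have heG := (S.walk i).edges_subset_edgeSet he
        have := hcase e he
        rw [hFdef, Set.mem_diff] at this
        by_contra hnot
        exact this ⟨heG, hnot⟩
    · rw [Submodule.add_eq_sup]
      exact sup_le (extIdeal_le_toricIdeal _) (extIdeal_le_toricIdeal _)
  obtain ⟨hEq1, hEq2⟩ := hredmin (S.GSF F) (G.deleteEdges F) hGSF_le_G₁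
    (le_of_eq hdelEq) hsum
  exact ⟨F, hFsub, S, hIsMin, hEq1.symm, hEq2.symm⟩
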